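/- The ideal class group of R = 𝔽_q[X,Y]/(P(X,Y) − Y) contains an element c with c ≠ 1 and c² = 1, i.e., an element of order 2; in particular, being finite, the class group of R has even order. -/

import Mathlib

/-!
Write `P = a x² + b xy + c y²`; irreducibility forces `a, c ≠ 0` and makes `Q(t) = P(1, t)`
irreducible. In `R` the relation `y = a x² + b xy + c y²` gives `x² = a⁻¹ y (1 - b x - c y)`,
so the ideal `I = (x, y)` satisfies `I² = (y)` and its class squares to `1`.

To see that `I` is not principal, parametrize the curve by `t = y / x`: `x = t / Q(t)`,
`y = t² / Q(t)`. This maps `R` into the ring of fractions `f / Qⁿ` with `deg f ≤ 2n`, whose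
units are the nonzero constants. If `I = (g)` then `y = v g²` with `v` a unit of `R`, hence a
constant; but the `Q`-adic valuation of `y = t² / Q` is odd, while that of `v g²` is even.
-/

theorem Prime.mul_sq_mul_ne_mul_pow_two_mul {A : Type*} [CommRing A] [IsDomain A] {p b u : A}
    (hp : Prime p) (hb : ¬ p ∣ b) (hu : IsUnit u) (f : A) (n : ℕ) :
    u * f ^ 2 * p ≠ b * p ^ (2 * n) := by
  induction n generalizing f with
  | zero => exact fun h => hb ⟨u * f ^ 2, by simpa [mul_comm] using h.symm⟩
  | succ n ih =>
    intro h
    have hf : p ∣ f := by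
      refine hp.dvd_of_dvd_pow (n := 2) (hu.dvd_mul_left.1 ⟨b * p ^ (2 * n), ?_⟩)
      refine mul_right_cancel₀ hp.ne_zero ?_
      rw [h]; ring
    obtain ⟨g, rfl⟩ := hf
    refine ih g (mul_right_cancel₀ (pow_ne_zero 2 hp.ne_zero) ?_)
    linear_combination h

theorem Ideal.span_pair_sq_eq_span_singleton {A : Type*} [CommRing A] {x y a b c : A}
    (ha : IsUnit a) (h : y = a * x ^ 2 + b * (x * y) + c * y ^ 2) :
    Ideal.span {x, y} ^ 2 = Ideal.span {y} := by
  obtain ⟨a', ha'⟩ := ha.exists_left_inv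
  rw [sq, span_pair_mul_span_pair]
  apply le_antisymm
  · rw [span_le]
    rintro _ (rfl | rfl | rfl | rfl) <;> rw [SetLike.mem_coe, mem_span_singleton']
    · exact ⟨a' * (1 - b * x - c * y), by linear_combination a' * h + x ^ 2 * ha'⟩
    all_goals first | exact ⟨_, rfl⟩ | exact ⟨_, mul_comm _ _⟩
  · rw [span_singleton_le_iff_mem]
    suffices a * x ^ 2 + b * (x * y) + c * y ^ 2 ∈ span {x * x, x * y, y * x, y * y} by
      rwa [← h] at this
    refine Ideal.add_mem _ (Ideal.add_mem _ ?_ ?_) ?_ <;>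
      exact mul_mem_left _ _ (subset_span (by simp [sq]))

theorem ClassGroup.exists_ne_one_sq_eq_one_of_sq_eq_span_singleton {A : Type*} [CommRing A]
    [IsDedekindDomain A] {I : Ideal A} {y : A} (hI : I ^ 2 = Ideal.span {y}) (hy : ∀ g, ¬ Associated (g ^ 2) y) :
    ∃ c : ClassGroup A, c ≠ 1 ∧ c ^ 2 = 1 := by
  have hI0 : I ≠ 0 := by
    rintro rfl
    obtain rfl : y = 0 := by simpa [eq_comm (a := (⊥ : Ideal A))] using hI
    exact hy 0 (by simp)
  refine ⟨ClassGroup.mk0 ⟨I, mem_nonZeroDivisors_of_ne_zero hI0⟩, ?_, ?_⟩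
  · rw [ne_eq, ClassGroup.mk0_eq_one_iff]
    rintro ⟨g, hg⟩
    rw [Ideal.submodule_span_eq] at hg
    rw [hg, Ideal.span_singleton_pow, Ideal.span_singleton_eq_span_singleton] at hI
    exact hy g hI
  · rw [← map_pow, ClassGroup.mk0_eq_one_iff]
    exact ⟨y, by rw [SubmonoidClass.coe_pow, hI, Ideal.submodule_span_eq]⟩

section RegularAtInfinity
open Polynomial
variable {F : Type*} [Field F]

/-- The fractions `f / Q ^ n` with `deg f ≤ n * deg Q`, i.e. those regular at infinity. -/
def regularAtInfinity (Q : F[X]) : Subring (Localization.Away Q) where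
  carrier := {z | ∃ (f : F[X]) (n : ℕ), f.natDegree ≤ n * Q.natDegree ∧
    z * algebraMap F[X] _ Q ^ n = algebraMap F[X] _ f}
  zero_mem' := ⟨0, 0, by simp, by simp⟩
  one_mem' := ⟨1, 0, by simp, by simp⟩
  neg_mem' := by
    rintro z ⟨f, n, hf, hz⟩
    exact ⟨-f, n, by rwa [natDegree_neg], by simp [← hz]⟩
  add_mem' := by
    rintro z w ⟨f, n, hf, hz⟩ ⟨g, m, hg, hw⟩
    refine ⟨f * Q ^ m + g * Q ^ n, n + m, ?_, ?_⟩
    · refine (natDegree_add_le _ _).trans (max_le ?_ ?_) <;>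
      refine natDegree_mul_le.trans ?_ <;>
      nlinarith [natDegree_pow_le (p := Q) (n := m), natDegree_pow_le (p := Q) (n := n)]
    · simp only [map_add, map_mul, map_pow, ← hz, ← hw]
      ring
  mul_mem' := by
    rintro z w ⟨f, n, hf, hz⟩ ⟨g, m, hg, hw⟩
    refine ⟨f * g, n + m, natDegree_mul_le.trans (by nlinarith), ?_⟩
    simp only [map_mul, ← hz, ← hw]
    ring

namespace regularAtInfinity
variable {Q : F[X]}

theorem algebraMap_mul_invSelf_pow_mem {f : F[X]} {n : ℕ} (hf : f.natDegree ≤ n * Q.natDegree) :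
    algebraMap F[X] _ f * IsLocalization.Away.invSelf Q ^ n ∈ regularAtInfinity Q :=
  ⟨f, n, hf, by
    rw [mul_assoc, ← mul_pow, mul_comm _ (algebraMap _ _ Q), IsLocalization.Away.mul_invSelf,
      one_pow, mul_one]⟩

theorem exists_eq_algebraMap_of_isUnit (hQ : Irreducible Q) {z : regularAtInfinity Q}
    (hz : IsUnit z) : ∃ v : F[X]ˣ, (z : Localization.Away Q) = algebraMap F[X] _ v := by
  obtain ⟨w, hzw⟩ := hz.exists_right_inv
  obtain ⟨f, n, hf, hfz⟩ := z.2
  obtain ⟨g, m, hg, hgw⟩ := w.2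
  have hinj : Function.Injective (algebraMap F[X] (Localization.Away Q)) :=
    IsLocalization.injective _ (powers_le_nonZeroDivisors_of_noZeroDivisors hQ.ne_zero)
  have hfg : f * g = Q ^ (n + m) := hinj <| by
    have : (z : Localization.Away Q) * w = 1 := by simpa using congrArg Subtype.val hzw
    simp only [map_mul, map_pow, ← hfz, ← hgw]
    linear_combination (algebraMap F[X] _ Q ^ (n + m)) * this
  obtain ⟨hf0, hg0⟩ := mul_ne_zero_iff.1 (hfg ▸ pow_ne_zero _ hQ.ne_zero)
  have hdeg : f.natDegree + g.natDegree = (n + m) * Q.natDegree := by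
    rw [← natDegree_mul hf0 hg0, hfg, natDegree_pow]
  -- `f` divides a power of `Q` and has the largest degree allowed, so it is `Q ^ n` up to a unit
  obtain ⟨j, -, v, hv⟩ := (dvd_prime_pow hQ.prime _).1 ⟨g, hfg.symm⟩
  obtain rfl : j = n := by
    have := congrArg natDegree hv
    rw [natDegree_mul hf0 v.ne_zero, natDegree_coe_units, natDegree_pow] at this
    have := hQ.natDegree_pos
    nlinarith
  refine ⟨v⁻¹, ((IsLocalization.Away.algebraMap_isUnit Q).pow j).mul_left_inj.1 ?_⟩
  rw [hfz, ← map_pow, ← map_mul, ← hv, mul_left_comm, Units.inv_mul, mul_one]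

theorem sq_mul_mul_ne_algebraMap (hQ : Irreducible Q) {b : F[X]} (hb : ¬ Q ∣ b)
    (z : regularAtInfinity Q) {u : regularAtInfinity Q} (hu : IsUnit u) :
    ((z ^ 2 * u : regularAtInfinity Q) : Localization.Away Q) * algebraMap F[X] _ Q ≠
      algebraMap F[X] _ b := by
  intro h
  obtain ⟨v, hv⟩ := exists_eq_algebraMap_of_isUnit hQ hu
  obtain ⟨f, n, -, hf⟩ := z.2
  refine hQ.prime.mul_sq_mul_ne_mul_pow_two_mul hb v.isUnit f n
    (IsLocalization.injective (Localization.Away Q)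
      (powers_le_nonZeroDivisors_of_noZeroDivisors hQ.ne_zero) ?_)
  simp only [map_mul, map_pow, ← hf, ← h, ← hv]
  push_cast
  ring

theorem not_associated_sq {A : Type*} [CommRing A] (hQ : Irreducible Q) {b : F[X]}
    (hb : ¬ Q ∣ b) (φ : A →+* Localization.Away Q) (hφ : ∀ r, φ r ∈ regularAtInfinity Q)
    {y : A} (hy : φ y * algebraMap F[X] _ Q = algebraMap F[X] _ b) (g : A) :
    ¬ Associated (g ^ 2) y := by
  rintro ⟨u, rfl⟩
  let ψ := φ.codRestrict _ hφ
  exact sq_mul_mul_ne_algebraMap hQ hb (ψ g) (u.isUnit.map ψ) (by simpa [ψ] using hy)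

end regularAtInfinity

end RegularAtInfinity

theorem Polynomial.aeval_algebraMap_X {R A : Type*} [CommSemiring R] [CommSemiring A] [Algebra R A]
    [Algebra (Polynomial R) A] [IsScalarTower R (Polynomial R) A] (p : Polynomial R) :
    aeval (algebraMap (Polynomial R) A X) p = algebraMap (Polynomial R) A p :=
  (aeval_algHom_apply (IsScalarTower.toAlgHom R (Polynomial R) A) X p).trans (by simp)

open MvPolynomial
open scoped Polynomial

theorem MvPolynomial.not_irreducible_of_eq_mul {σ R : Type*} [CommRing R] [Nontrivial R]
    {p q r : MvPolynomial σ R} (h : p = q * r) (hq : constantCoeff q = 0)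
    (hr : constantCoeff r = 0) : ¬ Irreducible p := by
  intro hp
  rcases hp.isUnit_or_isUnit h with hu | hu
  · simpa [hq] using hu.map constantCoeff
  · simpa [hr] using hu.map constantCoeff

noncomputable def binaryQuadraticForm {R : Type*} [CommSemiring R] (a b c : R) :
    MvPolynomial (Fin 2) R :=
  C a * X 0 ^ 2 + C b * (X 0 * X 1) + C c * X 1 ^ 2

theorem MvPolynomial.IsHomogeneous.exists_eq_binaryQuadraticForm {R : Type*} [CommSemiring R]
    {P : MvPolynomial (Fin 2) R} (hP : P.IsHomogeneous 2) :
    ∃ a b c : R, P = binaryQuadraticForm a b c := by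
  refine ⟨coeff (Finsupp.single 0 2) P, coeff (Finsupp.single 0 1 + Finsupp.single 1 1) P,
    coeff (Finsupp.single 1 2) P, ?_⟩
  ext d
  simp only [binaryQuadraticForm, X_pow_eq_monomial]
  simp only [X, monomial_mul, one_mul, coeff_add, coeff_C_mul, coeff_monomial]
  by_cases h2 : d.degree = 2
  · obtain rfl | rfl | rfl : d = Finsupp.single 0 2 ∨
        d = Finsupp.single 0 1 + Finsupp.single 1 1 ∨ d = Finsupp.single 1 2 := by
      simp only [Finsupp.degree_eq_sum, Fin.sum_univ_two] at h2
      simp only [Finsupp.ext_iff, Fin.forall_fin_two, Finsupp.single_eq_same, ne_eq, one_ne_zero,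
        zero_ne_one, not_false_eq_true, Finsupp.single_eq_of_ne, Finsupp.coe_add, Pi.add_apply,
        add_zero, zero_add]
      omega
    all_goals simp [Finsupp.ext_iff]
  · rw [hP.coeff_eq_zero h2, if_neg, if_neg, if_neg]
    · simp
    all_goals rintro rfl; simp at h2

namespace binaryQuadraticForm

/-- `P(1, t)` for `P = binaryQuadraticForm a b c`. -/
noncomputable def dehomogenize {R : Type*} [CommSemiring R] (a b c : R) : Polynomial R :=
  Polynomial.C c * Polynomial.X ^ 2 + Polynomial.C b * Polynomial.X + Polynomial.C a

variable {F : Type*} [Field F] {a b c : F}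

theorem left_ne_zero (h : Irreducible (binaryQuadraticForm a b c)) : a ≠ 0 := by
  rintro rfl
  exact not_irreducible_of_eq_mul (q := X 1) (r := C b * X 0 + C c * X 1)
    (by simp only [binaryQuadraticForm, map_zero]; ring) (by simp) (by simp) h

theorem right_ne_zero (h : Irreducible (binaryQuadraticForm a b c)) : c ≠ 0 := by
  rintro rfl
  exact not_irreducible_of_eq_mul (q := X 0) (r := C a * X 0 + C b * X 1)
    (by simp only [binaryQuadraticForm, map_zero]; ring) (by simp) (by simp) h

theorem natDegree_dehomogenize (hc : c ≠ 0) : (dehomogenize a b c).natDegree = 2 :=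
  Polynomial.natDegree_quadratic hc

theorem irreducible_dehomogenize (h : Irreducible (binaryQuadraticForm a b c)) :
    Irreducible (dehomogenize a b c) := by
  have hdeg := natDegree_dehomogenize (a := a) (b := b) (right_ne_zero h)
  rw [Polynomial.irreducible_iff_roots_eq_zero_of_degree_le_three (by omega) (by omega),
    Multiset.eq_zero_iff_forall_notMem]
  intro r hr
  rw [Polynomial.mem_roots (Polynomial.ne_zero_of_natDegree_gt (n := 0) (by omega))] at hr
  simp only [dehomogenize, Polynomial.IsRoot.def, Polynomial.eval_add, Polynomial.eval_mul,
    Polynomial.eval_C, Polynomial.eval_pow, Polynomial.eval_X] at hr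
  refine not_irreducible_of_eq_mul (q := X 1 - C r * X 0) (r := C c * X 1 + C (c * r + b) * X 0)
    ?_ (by simp) (by simp) h
  simp only [binaryQuadraticForm]
  rw [show a = -(b * r + c * r ^ 2) by linear_combination hr]
  simp only [map_neg, map_add, map_mul, map_pow]
  ring

theorem dehomogenize_not_dvd_X_sq (h : Irreducible (binaryQuadraticForm a b c)) :
    ¬ dehomogenize a b c ∣ Polynomial.X ^ 2 := by
  intro hdvd
  have := Polynomial.natDegree_le_of_dvd
    ((irreducible_dehomogenize h).prime.dvd_of_dvd_pow hdvd) Polynomial.X_ne_zero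
  rw [natDegree_dehomogenize (right_ne_zero h), Polynomial.natDegree_X] at this
  omega

theorem aeval_sub_X_one {A : Type*} [CommRing A] [Algebra F A] {t s : A}
    (h : Polynomial.aeval t (dehomogenize a b c) * s = 1) :
    aeval ![t * s, t ^ 2 * s] (binaryQuadraticForm a b c - X 1) = 0 := by
  simp only [dehomogenize, map_add, map_mul, map_pow, Polynomial.aeval_C, Polynomial.aeval_X] at h
  simp only [binaryQuadraticForm, map_sub, map_add, map_mul, map_pow, aeval_C, aeval_X,
    Matrix.cons_val_zero, Matrix.cons_val_one, Matrix.cons_val_fin_one]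
  linear_combination (t ^ 2 * s) * h

variable (a b c) in
/-- `(t / Q(t), t² / Q(t))`, inverse to `(x, y) ↦ y / x` on the curve `y = P(x, y)`. -/
noncomputable def parametrizingPoint : Fin 2 → Localization.Away (dehomogenize a b c) :=
  ![algebraMap F[X] _ Polynomial.X * IsLocalization.Away.invSelf (dehomogenize a b c),
    algebraMap F[X] _ (Polynomial.X ^ 2) * IsLocalization.Away.invSelf (dehomogenize a b c)]

variable (a b c) in
noncomputable def parametrization :
    (MvPolynomial (Fin 2) F ⧸ Ideal.span {binaryQuadraticForm a b c - X 1}) →ₐ[F]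
      Localization.Away (dehomogenize a b c) :=
  Ideal.Quotient.liftₐ _ (aeval (parametrizingPoint a b c)) fun p hp => by
    obtain ⟨q, rfl⟩ := Ideal.mem_span_singleton'.1 hp
    rw [map_mul, parametrizingPoint, map_pow, aeval_sub_X_one, mul_zero]
    rw [Polynomial.aeval_algebraMap_X, IsLocalization.Away.mul_invSelf]

theorem parametrization_mk (p : MvPolynomial (Fin 2) F) :
    parametrization a b c (Ideal.Quotient.mk _ p) = aeval (parametrizingPoint a b c) p :=
  Ideal.Quotient.liftₐ_apply _ _ _ _

theorem parametrization_mem (hc : c ≠ 0)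
    (r : MvPolynomial (Fin 2) F ⧸ Ideal.span {binaryQuadraticForm a b c - X 1}) :
    parametrization a b c r ∈ regularAtInfinity (dehomogenize a b c) := by
  obtain ⟨p, rfl⟩ := Ideal.Quotient.mk_surjective r
  rw [parametrization_mk]
  have hdeg := natDegree_dehomogenize (a := a) (b := b) hc
  induction p using MvPolynomial.induction_on with
  | C k =>
    simpa [IsScalarTower.algebraMap_apply F F[X] (Localization.Away _)] using
      regularAtInfinity.algebraMap_mul_invSelf_pow_mem (f := Polynomial.C k) (n := 0) (by simp)
  | add p q hp hq => rw [map_add]; exact add_mem hp hq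
  | mul_X p i hp =>
    rw [map_mul, aeval_X]
    refine mul_mem hp ?_
    fin_cases i
    · simpa [parametrizingPoint] using regularAtInfinity.algebraMap_mul_invSelf_pow_mem
        (Q := dehomogenize a b c) (f := Polynomial.X) (n := 1) (by simp [hdeg])
    · simpa only [parametrizingPoint, pow_one, Fin.mk_one, Matrix.cons_val_one,
        Matrix.cons_val_zero] using regularAtInfinity.algebraMap_mul_invSelf_pow_mem
        (Q := dehomogenize a b c) (f := Polynomial.X ^ 2) (n := 1) (by simp [hdeg])

theorem parametrization_mk_X_one_mul :
    parametrization a b c (Ideal.Quotient.mk _ (X 1)) * algebraMap F[X] _ (dehomogenize a b c) =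
      algebraMap F[X] _ (Polynomial.X ^ 2) := by
  rw [parametrization_mk, aeval_X, parametrizingPoint, Matrix.cons_val_one, Matrix.cons_val_zero,
    mul_assoc, mul_comm (IsLocalization.Away.invSelf _), IsLocalization.Away.mul_invSelf, mul_one]

end binaryQuadraticForm

theorem classGroup_has_order_two_element_general (F : Type*) [Field F]
    (P : MvPolynomial (Fin 2) F) (hP : P.IsHomogeneous 2) (hPirr : Irreducible P)
    [IsDedekindDomain (MvPolynomial (Fin 2) F ⧸ Ideal.span {P - X 1})] :
    (∃ c : ClassGroup (MvPolynomial (Fin 2) F ⧸ Ideal.span {P - X 1}),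
        c ≠ 1 ∧ c ^ 2 = 1) ∧
      Even (Nat.card (ClassGroup (MvPolynomial (Fin 2) F ⧸ Ideal.span {P - X 1}))) := by
  obtain ⟨a, b, c, rfl⟩ := hP.exists_eq_binaryQuadraticForm
  open binaryQuadraticForm in
  set mk := Ideal.Quotient.mk (Ideal.span {binaryQuadraticForm a b c - X 1})
  have hrel : mk (X 1) = mk (C a) * mk (X 0) ^ 2 + mk (C b) * (mk (X 0) * mk (X 1)) +
      mk (C c) * mk (X 1) ^ 2 := by
    simp only [← map_pow, ← map_mul, ← map_add]
    exact (Ideal.Quotient.mk_eq_mk_iff_sub_mem _ _).2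
      (Ideal.mem_span_singleton.2 ⟨-1, by rw [binaryQuadraticForm]; ring⟩)
  have hsq : Ideal.span {mk (X 0), mk (X 1)} ^ 2 = Ideal.span {mk (X 1)} :=
    Ideal.span_pair_sq_eq_span_singleton
      ((isUnit_iff_ne_zero.2 (left_ne_zero hPirr)).map (mk.comp C)) hrel
  have hnsq : ∀ g, ¬ Associated (g ^ 2) (mk (X 1)) :=
    regularAtInfinity.not_associated_sq (irreducible_dehomogenize hPirr)
      (dehomogenize_not_dvd_X_sq hPirr) (parametrization a b c).toRingHom
      (parametrization_mem (right_ne_zero hPirr)) parametrization_mk_X_one_mul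
  obtain ⟨cl, hcl1, hcl2⟩ :=
    ClassGroup.exists_ne_one_sq_eq_one_of_sq_eq_span_singleton hsq hnsq
  exact ⟨⟨cl, hcl1, hcl2⟩, even_iff_two_dvd.2
    ((orderOf_eq_prime hcl2 hcl1).symm.dvd.trans (orderOf_dvd_natCard cl))⟩

/-- The class group of `R = 𝔽_q[X,Y]/(P(X,Y) − Y)`, with `P` an irreducible quadratic form
and `q` odd, contains an element of order 2; in particular it has even order. -/
theorem classGroup_has_order_two_element (F : Type*) [Field F] [Fintype F]
    (hF : Odd (Fintype.card F))
    (P : MvPolynomial (Fin 2) F) (hP : P.IsHomogeneous 2) (hPirr : Irreducible P)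
    [IsDomain (MvPolynomial (Fin 2) F ⧸ Ideal.span {P - X 1})]
    [IsDedekindDomain (MvPolynomial (Fin 2) F ⧸ Ideal.span {P - X 1})] :
    (∃ c : ClassGroup (MvPolynomial (Fin 2) F ⧸ Ideal.span {P - X 1}),
        c ≠ 1 ∧ c ^ 2 = 1) ∧
      Even (Nat.card (ClassGroup (MvPolynomial (Fin 2) F ⧸ Ideal.span {P - X 1}))) :=
  classGroup_has_order_two_element_general F P hP hPirr
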